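/- arXiv:2605.09303 — 2 statements merged into one kernel-verified Lean document; each statement's English description precedes it below -/
import Mathlib

section
/- Let V be a finite type, B an ordered block of 3 positions, and for each permutation π of Fin 3 let Q^π(x₀,x₁,x₂) be the sequential product of strictly positive local conditionals along order π (with a fixed conditioning context absorbed). Suppose that for every reachable context (i.e. the empty prefix and every prefix obtained by fixing values of a subset of the three coordinates) and every pair of remaining coordinates, the local curl vanishes: the two order-induced pairwise pseudo-joints agree. Then Q^π = Q^{π'} pointwise for all permutations π, π' of Fin 3. -/
open Finset

/-- The order-induced pseudo-joint on a 3-position block: the sequential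
product of local conditionals along the order `π`.  A context is a partial
assignment `Fin 3 → Option V` (`none` means unresolved); the fixed observed
context is absorbed into `q`. -/
noncomputable def pseudoJoint3 {V : Type*}
    (q : (Fin 3 → Option V) → Fin 3 → V → ℝ)
    (π : Equiv.Perm (Fin 3)) (x : Fin 3 → V) : ℝ :=
  let c₀ : Fin 3 → Option V := fun _ => none
  let c₁ := Function.update c₀ (π 0) (some (x (π 0)))
  let c₂ := Function.update c₁ (π 1) (some (x (π 1)))
  q c₀ (π 0) (x (π 0)) * q c₁ (π 1) (x (π 1)) * q c₂ (π 2) (x (π 2))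

noncomputable def T3 {V : Type*}
    (q : (Fin 3 → Option V) → Fin 3 → V → ℝ) (x : Fin 3 → V)
    (i j k : Fin 3) : ℝ :=
  q (fun _ => none) i (x i) *
  q (Function.update (fun _ => none) i (some (x i))) j (x j) *
  q (Function.update (Function.update (fun _ => none) i (some (x i))) j (some (x j))) k (x k)

lemma pseudoJoint3_eq_T3 {V : Type*}
    (q : (Fin 3 → Option V) → Fin 3 → V → ℝ)
    (π : Equiv.Perm (Fin 3)) (x : Fin 3 → V) :
    pseudoJoint3 q π x = T3 q x (π 0) (π 1) (π 2) := rfl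

section
variable {V : Type*} (q : (Fin 3 → Option V) → Fin 3 → V → ℝ)
    (hcurl : ∀ (c : Fin 3 → Option V) (i j : Fin 3), i ≠ j →
      c i = none → c j = none → ∀ a b : V,
        q c i a * q (Function.update c i (some a)) j b
          = q c j b * q (Function.update c j (some b)) i a)
    (x : Fin 3 → V)

include hcurl

lemma T3_swapA {i j k : Fin 3} (hij : i ≠ j) :
    T3 q x i j k = T3 q x j i k := by
  unfold T3
  rw [Function.update_comm hij, hcurl (fun _ => none) i j hij rfl rfl (x i) (x j)]

lemma T3_swapB {i j k : Fin 3} (hij : i ≠ j) (hik : i ≠ k) (hjk : j ≠ k) :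
    T3 q x i j k = T3 q x i k j := by
  unfold T3
  rw [mul_assoc, mul_assoc,
    hcurl (Function.update (fun _ => none) i (some (x i))) j k hjk
      (Function.update_of_ne hij.symm _ _) (Function.update_of_ne hik.symm _ _)
      (x j) (x k)]

lemma T3_eq_id {i j k : Fin 3} (hij : i ≠ j) (hik : i ≠ k) (hjk : j ≠ k) :
    T3 q x i j k = T3 q x 0 1 2 := by
  fin_cases i <;> fin_cases j <;> fin_cases k <;>
    simp_all only [ne_eq, not_true_eq_false, not_false_eq_true] <;>
    first
      | rfl
      | (rw [T3_swapA q hcurl x (by decide)]; rfl)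
      | (rw [T3_swapB q hcurl x (by decide) (by decide) (by decide)]; rfl)
      | (rw [T3_swapA q hcurl x (by decide),
            T3_swapB q hcurl x (by decide) (by decide) (by decide)]; rfl)
      | (rw [T3_swapB q hcurl x (by decide) (by decide) (by decide),
            T3_swapA q hcurl x (by decide)]; rfl)
      | (rw [T3_swapA q hcurl x (by decide),
            T3_swapB q hcurl x (by decide) (by decide) (by decide),
            T3_swapA q hcurl x (by decide)]; rfl)
end

/-- if every reachable elementary square is curl-free (the two
pairwise order-induced pseudo-joints agree at every reachable context), then
the block pseudo-joint is the same for all six orders of the 3-block. -/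
theorem curlFree_implies_order_invariance
    {V : Type*} [Fintype V] [Nonempty V]
    (q : (Fin 3 → Option V) → Fin 3 → V → ℝ)
    (hpos : ∀ c i a, c i = none → 0 < q c i a)
    (hcurl : ∀ (c : Fin 3 → Option V) (i j : Fin 3), i ≠ j →
      c i = none → c j = none → ∀ a b : V,
        q c i a * q (Function.update c i (some a)) j b
          = q c j b * q (Function.update c j (some b)) i a) :
    ∀ (π π' : Equiv.Perm (Fin 3)) (x : Fin 3 → V),
      pseudoJoint3 q π x = pseudoJoint3 q π' x := by
  intro π π' x
  rw [pseudoJoint3_eq_T3, pseudoJoint3_eq_T3,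
    T3_eq_id q hcurl x (π.injective.ne (by decide)) (π.injective.ne (by decide))
      (π.injective.ne (by decide)),
    T3_eq_id q hcurl x (π'.injective.ne (by decide)) (π'.injective.ne (by decide))
      (π'.injective.ne (by decide))]
end

section
/- Let V be a finite type. Suppose for every subset A ⊆ Fin 3, every assignment σ : A → V, and every i ∉ A, we are given a strictly positive conditional q_i(· | σ) : V → ℝ. If for some permutations π, π' of Fin 3 differing by a single adjacent transposition at positions (k, k+1), the order-induced pseudo-joints Q^π and Q^{π'} are equal as functions on V³, then for the swapped coordinate pair (i, j) = (π_k, π_{k+1}) and every assignment σ to the common prefix π_{<k} and all a, b ∈ V, one has q_i(a | σ) · q_j(b | σ ∪ {i ↦ a}) = q_j(b | σ) · q_i(a | σ ∪ {j ↦ b}). -/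
open Finset

/-- if the pseudo-joints of two orders differing by one adjacent
transposition at positions `(k, k+1)` coincide, then the local curl on the
swapped coordinate pair vanishes at the common prefix context: the two
pairwise factorizations agree for all token values. -/
theorem adjacent_order_invariance_implies_zero_curl
    {V : Type*} [Fintype V] [Nonempty V]
    (q : (Fin 3 → Option V) → Fin 3 → V → ℝ)
    (hpos : ∀ c i a, c i = none → 0 < q c i a)
    (π : Equiv.Perm (Fin 3)) (k : Fin 2)
    (heq : ∀ x : Fin 3 → V,
      pseudoJoint3 q π x
        = pseudoJoint3 q ((Equiv.swap (k.castSucc) k.succ).trans π) x) :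
    ∀ x : Fin 3 → V,
      let i := π k.castSucc
      let j := π k.succ
      let c : Fin 3 → Option V :=
        fun m => if ∃ l : Fin 3, l < k.castSucc ∧ π l = m then some (x m) else none
      q c i (x i) * q (Function.update c i (some (x i))) j (x j)
        = q c j (x j) * q (Function.update c j (some (x j))) i (x i) := by
  intro x
  have h := heq x
  have hinj := π.injective
  have h01 : (π 0 : Fin 3) ≠ π 1 := fun hh => by simpa using hinj hh
  have h02 : (π 0 : Fin 3) ≠ π 2 := fun hh => by simpa using hinj hh
  have h12 : (π 1 : Fin 3) ≠ π 2 := fun hh => by simpa using hinj hh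
  have hk : k = 0 ∨ k = 1 := by omega
  rcases hk with hk | hk <;> subst hk
  · -- k = 0 : castSucc = 0, succ = 1
    simp only [show ((0:Fin 2)).castSucc = (0:Fin 3) from rfl,
      show ((0:Fin 2)).succ = (1:Fin 3) from rfl] at h ⊢
    simp only [pseudoJoint3, Equiv.trans_apply, Equiv.swap_apply_left,
      Equiv.swap_apply_right,
      Equiv.swap_apply_of_ne_of_ne (show (2:Fin 3) ≠ 0 by decide)
        (show (2:Fin 3) ≠ 1 by decide)] at h
    have hctx : Function.update (Function.update (fun _ => (none : Option V)) (π 0)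
          (some (x (π 0)))) (π 1) (some (x (π 1)))
        = Function.update (Function.update (fun _ => (none : Option V)) (π 1)
          (some (x (π 1)))) (π 0) (some (x (π 0))) :=
      Function.update_comm h01 _ _ _
    rw [hctx] at h
    have hc : (fun m : Fin 3 =>
        if ∃ l : Fin 3, l < (0 : Fin 3) ∧ π l = m then some (x m) else none)
        = fun _ => (none : Option V) := by
      funext m
      simp [Fin.not_lt_zero]
    simp only [hc]
    have hpos3 : q (Function.update (Function.update (fun _ => (none : Option V)) (π 1)
        (some (x (π 1)))) (π 0) (some (x (π 0)))) (π 2) (x (π 2)) ≠ 0 := by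
      refine ne_of_gt (hpos _ _ _ ?_)
      rw [Function.update_of_ne h02.symm, Function.update_of_ne h12.symm]
    exact mul_right_cancel₀ hpos3 h
  · -- k = 1 : castSucc = 1, succ = 2
    simp only [show ((1:Fin 2)).castSucc = (1:Fin 3) from rfl,
      show ((1:Fin 2)).succ = (2:Fin 3) from rfl] at h ⊢
    simp only [pseudoJoint3, Equiv.trans_apply, Equiv.swap_apply_left,
      Equiv.swap_apply_right,
      Equiv.swap_apply_of_ne_of_ne (show (0:Fin 3) ≠ 1 by decide)
        (show (0:Fin 3) ≠ 2 by decide)] at h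
    have hc : (fun m : Fin 3 =>
        if ∃ l : Fin 3, l < (1 : Fin 3) ∧ π l = m then some (x m) else none)
        = Function.update (fun _ => (none : Option V)) (π 0) (some (x (π 0))) := by
      funext m
      by_cases hm : π 0 = m
      · subst hm
        rw [Function.update_self, if_pos ⟨0, by decide, rfl⟩]
      · rw [Function.update_of_ne (Ne.symm hm), if_neg]
        rintro ⟨l, hl, hlm⟩
        have : l = 0 := by omega
        exact hm (this ▸ hlm)
    simp only [hc]
    have hpos0 : q (fun _ => (none : Option V)) (π 0) (x (π 0)) ≠ 0 :=
      ne_of_gt (hpos _ _ _ rfl)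
    rw [mul_assoc, mul_assoc] at h
    exact mul_left_cancel₀ hpos0 h
end
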